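/- arXiv:2408.04529 — 3 statements merged into one kernel-verified Lean document; each statement's English description precedes it below -/
import Mathlib

section
/- Let d ≥ 1 and T > 0. Let U₀ : ℝᵈ → ℂ be locally integrable and let ψ, F, U : (0,T)×ℝᵈ → ℂ be measurable such that for every R > 0, ∫₀^T ∫_{B_R} ( |U(t,ξ)| + |ψ(t,ξ)·U(t,ξ)| + |F(t,ξ)| ) dξ dt < ∞. Suppose that for every smooth compactly supported φ : ℝᵈ → ℂ and for a.e. t ∈ (0,T), ∫_{ℝᵈ} U(t,ξ)·conj(φ(ξ)) dξ = ∫_{ℝᵈ} U₀(ξ)·conj(φ(ξ)) dξ + ∫₀^t ( ∫_{ℝᵈ} ψ(s,ξ)·U(s,ξ)·conj(φ(ξ)) dξ ) ds + ∫₀^t ( ∫_{ℝᵈ} F(s,ξ)·conj(φ(ξ)) dξ ) ds (all displayed integrals being absolutely convergent for a.e. t). Then U(t,ξ) = U₀(ξ) + ∫₀^t ψ(s,ξ)·U(s,ξ) ds + ∫₀^t F(s,ξ) ds for a.e. (t,ξ) ∈ (0,T)×ℝᵈ. -/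
open MeasureTheory Set Metric Filter
open scoped ENNReal NNReal ComplexConjugate Topology Convolution

namespace PointwiseVolterraAux

variable {d : ℕ}

lemma key_ae_zero (D : Set (EuclideanSpace ℝ (Fin d))) (hD : Dense D)
    (ρ : ℕ → ContDiffBump (0 : EuclideanSpace ℝ (Fin d)))
    (hρout : Tendsto (fun n => (ρ n).rOut) atTop (𝓝 0))
    (hρK : ∀ n, (ρ n).rOut ≤ 2 * (ρ n).rIn)
    (g : EuclideanSpace ℝ (Fin d) → ℂ) (hg : LocallyIntegrable g volume)
    (h : ∀ n, ∀ x ∈ D, ∫ ξ, g ξ * ((ρ n).normed volume (x - ξ) : ℂ) = 0) :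
    ∀ᵐ ξ, g ξ = 0 := by
  have conv0 : ∀ n x, (((ρ n).normed volume) ⋆[ContinuousLinearMap.lsmul ℝ ℝ, volume] g) x = 0 := by
    intro n
    have hc : Continuous (((ρ n).normed volume) ⋆[ContinuousLinearMap.lsmul ℝ ℝ, volume] g) :=
      HasCompactSupport.continuous_convolution_left _ ((ρ n).hasCompactSupport_normed)
        ((ρ n).continuous_normed) hg
    have heq : ∀ x ∈ D,
        (((ρ n).normed volume) ⋆[ContinuousLinearMap.lsmul ℝ ℝ, volume] g) x = 0 := by
      intro x hx
      rw [convolution_eq_swap]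
      simpa [ContinuousLinearMap.lsmul_apply, Complex.real_smul, mul_comm] using h n x hx
    intro x
    have := Continuous.ext_on hD hc continuous_const heq
    exact congrFun this x
  have := ContDiffBump.ae_convolution_tendsto_right_of_locallyIntegrable (K := 2)
      (φ := ρ) (l := atTop) hρout (Eventually.of_forall hρK) hg
  filter_upwards [this] with ξ hξ
  exact (tendsto_nhds_unique (tendsto_const_nhds.congr fun n => (conv0 n ξ).symm) hξ).symm

lemma meas_J {α : Type*} [MeasurableSpace α] (W : ℝ × α → ℂ) (hW : Measurable W) :
    StronglyMeasurable (fun p : ℝ × α => ∫ s in Ioc (0:ℝ) p.1, W (s, p.2)) := by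
  have h1 : ∀ p : ℝ × α, (∫ s in Ioc (0:ℝ) p.1, W (s, p.2))
      = ∫ s, (Ioc (0:ℝ) p.1).indicator (fun s => W (s, p.2)) s := fun p =>
    (integral_indicator measurableSet_Ioc).symm
  simp only [h1]
  have hm : Measurable (fun q : (ℝ × α) × ℝ =>
      (Ioc (0:ℝ) q.1.1).indicator (fun s => W (s, q.1.2)) q.2) := by
    simp only [Set.indicator_apply, mem_Ioc]
    refine Measurable.ite ?_ (hW.comp (measurable_snd.prodMk measurable_fst.snd))
      measurable_const
    exact (measurableSet_lt measurable_const measurable_snd).inter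
      (measurableSet_le measurable_snd measurable_fst.fst)
  exact hm.stronglyMeasurable.integral_prod_right'

lemma fubini_term (W : ℝ × EuclideanSpace ℝ (Fin d) → ℂ) (hW : Measurable W)
    (t T R C : ℝ) (htT : t ≤ T)
    (φ : EuclideanSpace ℝ (Fin d) → ℂ) (hφm : Continuous φ)
    (hφsupp : ∀ ξ, ξ ∉ ball (0 : EuclideanSpace ℝ (Fin d)) R → φ ξ = 0)
    (hφC : ∀ ξ, ‖φ ξ‖ ≤ C)
    (hfin : (∫⁻ s in Ioc (0:ℝ) T, ∫⁻ ξ in ball (0 : EuclideanSpace ℝ (Fin d)) R,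
      (‖W (s, ξ)‖₊ : ℝ≥0∞)) < ⊤) :
    Integrable (fun q : ℝ × EuclideanSpace ℝ (Fin d) => W q * conj (φ q.2))
      ((volume.restrict (Ioc (0:ℝ) t)).prod volume) := by
  have hmeas : Measurable (fun q : ℝ × EuclideanSpace ℝ (Fin d) => W q * conj (φ q.2)) :=
    hW.mul ((Complex.continuous_conj.comp hφm).measurable.comp measurable_snd)
  refine ⟨hmeas.aestronglyMeasurable, ?_⟩
  simp only [HasFiniteIntegral]
  have hWn : Measurable fun q : ℝ × EuclideanSpace ℝ (Fin d) =>
      (‖W q * conj (φ q.2)‖₊ : ℝ≥0∞) := hmeas.enorm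
  rw [lintegral_prod _ hmeas.enorm.aemeasurable]
  have hinner : ∀ s : ℝ, (∫⁻ ξ, (‖W (s, ξ) * conj (φ ξ)‖₊ : ℝ≥0∞))
      ≤ (∫⁻ ξ in ball (0 : EuclideanSpace ℝ (Fin d)) R, (‖W (s, ξ)‖₊ : ℝ≥0∞))
        * ENNReal.ofReal C := by
    intro s
    have hind : (fun ξ => (‖W (s, ξ) * conj (φ ξ)‖₊ : ℝ≥0∞))
        = (ball (0 : EuclideanSpace ℝ (Fin d)) R).indicator
            (fun ξ => (‖W (s, ξ) * conj (φ ξ)‖₊ : ℝ≥0∞)) := by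
      symm
      rw [indicator_eq_self]
      intro ξ hξ
      simp only [Function.mem_support, ne_eq] at hξ
      by_contra hb
      exact hξ (by simp [hφsupp ξ hb])
    rw [hind, lintegral_indicator measurableSet_ball]
    have hm : Measurable fun ξ : EuclideanSpace ℝ (Fin d) => (‖W (s, ξ)‖₊ : ℝ≥0∞) :=
      (hW.comp (measurable_const.prodMk measurable_id)).enorm
    rw [← lintegral_mul_const _ hm]
    refine lintegral_mono fun ξ => ?_
    rw [nnnorm_mul]
    push_cast
    refine mul_le_mul_right ?_ _
    rw [← enorm_eq_nnnorm, ← ofReal_norm]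
    exact ENNReal.ofReal_le_ofReal (by simpa using hφC ξ)
  calc (∫⁻ s in Ioc (0:ℝ) t, ∫⁻ ξ, (‖W (s, ξ) * conj (φ ξ)‖₊ : ℝ≥0∞))
      ≤ ∫⁻ s in Ioc (0:ℝ) t, (∫⁻ ξ in ball (0 : EuclideanSpace ℝ (Fin d)) R,
          (‖W (s, ξ)‖₊ : ℝ≥0∞)) * ENNReal.ofReal C := lintegral_mono hinner
    _ = (∫⁻ s in Ioc (0:ℝ) t, ∫⁻ ξ in ball (0 : EuclideanSpace ℝ (Fin d)) R,
          (‖W (s, ξ)‖₊ : ℝ≥0∞)) * ENNReal.ofReal C := by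
        rw [lintegral_mul_const
          (f := fun s => ∫⁻ ξ in ball (0 : EuclideanSpace ℝ (Fin d)) R, (‖W (s, ξ)‖₊ : ℝ≥0∞)) _
          (hW.enorm.lintegral_prod_right' (ν := volume.restrict (ball 0 R)))]
    _ ≤ (∫⁻ s in Ioc (0:ℝ) T, ∫⁻ ξ in ball (0 : EuclideanSpace ℝ (Fin d)) R,
          (‖W (s, ξ)‖₊ : ℝ≥0∞)) * ENNReal.ofReal C := by
        gcongr
    _ < ⊤ := ENNReal.mul_lt_top hfin ENNReal.ofReal_lt_top

lemma fubini_swap (W : ℝ × EuclideanSpace ℝ (Fin d) → ℂ) (hW : Measurable W)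
    (t T R C : ℝ) (htT : t ≤ T)
    (φ : EuclideanSpace ℝ (Fin d) → ℂ) (hφm : Continuous φ)
    (hφsupp : ∀ ξ, ξ ∉ ball (0 : EuclideanSpace ℝ (Fin d)) R → φ ξ = 0)
    (hφC : ∀ ξ, ‖φ ξ‖ ≤ C)
    (hfin : (∫⁻ s in Ioc (0:ℝ) T, ∫⁻ ξ in ball (0 : EuclideanSpace ℝ (Fin d)) R,
      (‖W (s, ξ)‖₊ : ℝ≥0∞)) < ⊤) :
    (∫ s in Ioc (0:ℝ) t, ∫ ξ, W (s, ξ) * conj (φ ξ))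
      = (∫ ξ, (∫ s in Ioc (0:ℝ) t, W (s, ξ)) * conj (φ ξ))
    ∧ Integrable (fun ξ => (∫ s in Ioc (0:ℝ) t, W (s, ξ)) * conj (φ ξ)) volume := by
  have hI := fubini_term W hW t T R C htT φ hφm hφsupp hφC hfin
  have hI' : Integrable (Function.uncurry fun s ξ => W (s, ξ) * conj (φ ξ))
      ((volume.restrict (Ioc (0:ℝ) t)).prod volume) :=
    hI.congr (Filter.Eventually.of_forall fun q => rfl)
  have hswap := MeasureTheory.integral_integral_swap hI'
  have hpt : ∀ ξ, (∫ s in Ioc (0:ℝ) t, W (s, ξ) * conj (φ ξ))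
      = (∫ s in Ioc (0:ℝ) t, W (s, ξ)) * conj (φ ξ) := fun ξ =>
    integral_mul_const _ _
  constructor
  · rw [hswap]
    exact integral_congr_ae (Filter.Eventually.of_forall hpt)
  · exact (hI.integral_prod_right).congr (Filter.Eventually.of_forall hpt)

lemma locint_J (W : ℝ × EuclideanSpace ℝ (Fin d) → ℂ) (hW : Measurable W) (t T : ℝ) (htT : t ≤ T)
    (hfin : ∀ R : ℝ, 0 < R → (∫⁻ s in Ioc (0:ℝ) T, ∫⁻ ξ in ball (0 : EuclideanSpace ℝ (Fin d)) R,
      (‖W (s, ξ)‖₊ : ℝ≥0∞)) < ⊤) :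
    LocallyIntegrable (fun ξ => ∫ s in Ioc (0:ℝ) t, W (s, ξ)) volume := by
  rw [locallyIntegrable_iff]
  intro k hk
  obtain ⟨R, hR0, hkR⟩ := hk.isBounded.subset_ball_lt 0 0
  refine IntegrableOn.mono_set ?_ hkR
  constructor
  · exact ((meas_J W hW).comp_measurable
      (measurable_const.prodMk measurable_id)).aestronglyMeasurable
  · simp only [HasFiniteIntegral]
    have hb : ∀ ξ : EuclideanSpace ℝ (Fin d),
        (‖∫ s in Ioc (0:ℝ) t, W (s, ξ)‖₊ : ℝ≥0∞) ≤ ∫⁻ s in Ioc (0:ℝ) t, (‖W (s, ξ)‖₊ : ℝ≥0∞) :=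
      fun ξ => enorm_integral_le_lintegral_enorm _
    calc ∫⁻ ξ in ball (0 : EuclideanSpace ℝ (Fin d)) R, (‖∫ s in Ioc (0:ℝ) t, W (s, ξ)‖₊ : ℝ≥0∞)
        ≤ ∫⁻ ξ in ball (0 : EuclideanSpace ℝ (Fin d)) R,
            ∫⁻ s in Ioc (0:ℝ) t, (‖W (s, ξ)‖₊ : ℝ≥0∞) := lintegral_mono hb
      _ = ∫⁻ s in Ioc (0:ℝ) t, ∫⁻ ξ in ball (0 : EuclideanSpace ℝ (Fin d)) R,
            (‖W (s, ξ)‖₊ : ℝ≥0∞) :=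
          lintegral_lintegral_swap ((hW.comp measurable_swap).enorm.aemeasurable)
      _ ≤ ∫⁻ s in Ioc (0:ℝ) T, ∫⁻ ξ in ball (0 : EuclideanSpace ℝ (Fin d)) R,
            (‖W (s, ξ)‖₊ : ℝ≥0∞) :=
          lintegral_mono' (Measure.restrict_mono (Ioc_subset_Ioc_right htT) le_rfl) le_rfl
      _ < ⊤ := hfin R hR0

lemma locint_sections (V : ℝ × EuclideanSpace ℝ (Fin d) → ℂ) (hV : Measurable V) (T : ℝ)
    (hfin : ∀ R : ℝ, 0 < R → (∫⁻ s in Ioc (0:ℝ) T, ∫⁻ ξ in ball (0 : EuclideanSpace ℝ (Fin d)) R,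
      (‖V (s, ξ)‖₊ : ℝ≥0∞)) < ⊤) :
    ∀ᵐ t ∂(volume.restrict (Ioc (0:ℝ) T)), LocallyIntegrable (fun ξ => V (t, ξ)) volume := by
  have hae : ∀ n : ℕ, ∀ᵐ t ∂(volume.restrict (Ioc (0:ℝ) T)),
      (∫⁻ ξ in ball (0 : EuclideanSpace ℝ (Fin d)) (n + 1), (‖V (t, ξ)‖₊ : ℝ≥0∞)) < ⊤ := by
    intro n
    refine ae_lt_top (hV.enorm.lintegral_prod_right'
      (ν := volume.restrict (ball (0 : EuclideanSpace ℝ (Fin d)) (n + 1)))) ?_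
    exact (hfin (n + 1) (by positivity)).ne
  rw [← ae_all_iff] at hae
  filter_upwards [hae] with t ht
  rw [locallyIntegrable_iff]
  intro k hk
  obtain ⟨R, hR0, hkR⟩ := hk.isBounded.subset_ball_lt 0 0
  obtain ⟨n, hn⟩ := exists_nat_ge R
  refine IntegrableOn.mono_set ?_
    (hkR.trans (ball_subset_ball (show R ≤ (n:ℝ) + 1 by linarith)))
  refine ⟨(hV.comp (measurable_const.prodMk measurable_id)).aestronglyMeasurable, ?_⟩
  simpa only [HasFiniteIntegral, enorm_eq_nnnorm] using ht n

end PointwiseVolterraAux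

open PointwiseVolterraAux

/-- **From the weak (tested) form of the equation to a pointwise Volterra equation in the
frequency variable** (the deterministic part of the paper's representation lemma): if `U₀` is
locally integrable, `U`, `ψ·U` and `F` are locally integrable on `(0,T) × B_R` for all `R > 0`,
and for every smooth compactly supported test function `φ` the tested identity
`∫ U(t,ξ)conj(φ(ξ))dξ = ∫ U₀ conj(φ) + ∫₀^t ∫ ψU conj(φ) + ∫₀^t ∫ F conj(φ)` holds for a.e.
`t ∈ (0,T)` (all displayed integrals converging absolutely for a.e. `t`), then
`U(t,ξ) = U₀(ξ) + ∫₀^t ψ(s,ξ)U(s,ξ)ds + ∫₀^t F(s,ξ)ds` for a.e. `(t,ξ) ∈ (0,T) × ℝᵈ`. -/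
theorem pointwise_volterra_of_tested
    (d : ℕ) (hd : 1 ≤ d) (T : ℝ) (hT : 0 < T)
    (U₀ : EuclideanSpace ℝ (Fin d) → ℂ)
    (ψ F U : ℝ → EuclideanSpace ℝ (Fin d) → ℂ)
    (hU₀loc : LocallyIntegrable U₀ volume)
    (hψmeas : Measurable fun p : ℝ × EuclideanSpace ℝ (Fin d) => ψ p.1 p.2)
    (hFmeas : Measurable fun p : ℝ × EuclideanSpace ℝ (Fin d) => F p.1 p.2)
    (hUmeas : Measurable fun p : ℝ × EuclideanSpace ℝ (Fin d) => U p.1 p.2)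
    (hloc : ∀ R : ℝ, 0 < R →
      (∫⁻ t in Ioc (0 : ℝ) T, ∫⁻ ξ in ball (0 : EuclideanSpace ℝ (Fin d)) R,
        ((‖U t ξ‖₊ : ℝ≥0∞) + (‖ψ t ξ * U t ξ‖₊ : ℝ≥0∞) + (‖F t ξ‖₊ : ℝ≥0∞))) < ⊤)
    (hweak : ∀ φ : EuclideanSpace ℝ (Fin d) → ℂ,
      ContDiff ℝ (⊤ : ℕ∞) φ → HasCompactSupport φ →
      ∀ᵐ t ∂(volume.restrict (Ioc (0 : ℝ) T)),
        Integrable (fun ξ => U t ξ * conj (φ ξ)) ∧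
        Integrable (fun ξ => U₀ ξ * conj (φ ξ)) ∧
        (∀ᵐ s ∂(volume.restrict (Ioc (0 : ℝ) t)),
          Integrable (fun ξ => ψ s ξ * U s ξ * conj (φ ξ)) ∧
          Integrable fun ξ => F s ξ * conj (φ ξ)) ∧
        IntegrableOn (fun s => ∫ ξ, ψ s ξ * U s ξ * conj (φ ξ)) (Ioc (0 : ℝ) t) ∧
        IntegrableOn (fun s => ∫ ξ, F s ξ * conj (φ ξ)) (Ioc (0 : ℝ) t) ∧
        (∫ ξ, U t ξ * conj (φ ξ))
          = (∫ ξ, U₀ ξ * conj (φ ξ))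
            + (∫ s in Ioc (0 : ℝ) t, ∫ ξ, ψ s ξ * U s ξ * conj (φ ξ))
            + ∫ s in Ioc (0 : ℝ) t, ∫ ξ, F s ξ * conj (φ ξ)) :
    ∀ᵐ p : ℝ × EuclideanSpace ℝ (Fin d)
        ∂((volume.restrict (Ioc (0 : ℝ) T)).prod volume),
      U p.1 p.2 = U₀ p.2 + (∫ s in Ioc (0 : ℝ) p.1, ψ s p.2 * U s p.2)
        + ∫ s in Ioc (0 : ℝ) p.1, F s p.2 := by
  classical
  -- finiteness of each individual term
  have hfinU : ∀ R : ℝ, 0 < R → (∫⁻ s in Ioc (0:ℝ) T, ∫⁻ ξ in ball (0 : EuclideanSpace ℝ (Fin d)) R,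
      (‖U s ξ‖₊ : ℝ≥0∞)) < ⊤ := by
    intro R hR
    refine lt_of_le_of_lt ?_ (hloc R hR)
    refine lintegral_mono fun s => lintegral_mono fun ξ => ?_
    calc (‖U s ξ‖₊ : ℝ≥0∞) ≤ (‖U s ξ‖₊ : ℝ≥0∞) + (‖ψ s ξ * U s ξ‖₊ : ℝ≥0∞) := le_self_add
      _ ≤ (‖U s ξ‖₊ : ℝ≥0∞) + (‖ψ s ξ * U s ξ‖₊ : ℝ≥0∞) + (‖F s ξ‖₊ : ℝ≥0∞) := le_self_add
  have hfinψU : ∀ R : ℝ, 0 < R → (∫⁻ s in Ioc (0:ℝ) T, ∫⁻ ξ in ball (0 : EuclideanSpace ℝ (Fin d)) R,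
      (‖ψ s ξ * U s ξ‖₊ : ℝ≥0∞)) < ⊤ := by
    intro R hR
    refine lt_of_le_of_lt ?_ (hloc R hR)
    refine lintegral_mono fun s => lintegral_mono fun ξ => ?_
    calc (‖ψ s ξ * U s ξ‖₊ : ℝ≥0∞) ≤ (‖U s ξ‖₊ : ℝ≥0∞) + (‖ψ s ξ * U s ξ‖₊ : ℝ≥0∞) := le_add_self
      _ ≤ (‖U s ξ‖₊ : ℝ≥0∞) + (‖ψ s ξ * U s ξ‖₊ : ℝ≥0∞) + (‖F s ξ‖₊ : ℝ≥0∞) := le_self_add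
  have hfinF : ∀ R : ℝ, 0 < R → (∫⁻ s in Ioc (0:ℝ) T, ∫⁻ ξ in ball (0 : EuclideanSpace ℝ (Fin d)) R,
      (‖F s ξ‖₊ : ℝ≥0∞)) < ⊤ := by
    intro R hR
    refine lt_of_le_of_lt ?_ (hloc R hR)
    refine lintegral_mono fun s => lintegral_mono fun ξ => ?_
    exact le_add_self
  have hψUmeas : Measurable fun q : ℝ × EuclideanSpace ℝ (Fin d) => ψ q.1 q.2 * U q.1 q.2 := hψmeas.mul hUmeas
  -- the tested form with the pointwise Volterra integrand
  have tested : ∀ φ : EuclideanSpace ℝ (Fin d) → ℂ, ContDiff ℝ (⊤ : ℕ∞) φ → HasCompactSupport φ →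
      ∀ᵐ t ∂(volume.restrict (Ioc (0:ℝ) T)),
        (∫ ξ, (U t ξ - U₀ ξ - (∫ s in Ioc (0:ℝ) t, ψ s ξ * U s ξ)
          - ∫ s in Ioc (0:ℝ) t, F s ξ) * conj (φ ξ)) = 0 := by
    intro φ hφ hφc
    obtain ⟨R, hR0, hsupp⟩ := hφc.isBounded.subset_ball_lt 0 0
    obtain ⟨C, hC⟩ := hφc.exists_bound_of_continuous hφ.continuous
    have hφ0 : ∀ ξ, ξ ∉ ball (0 : EuclideanSpace ℝ (Fin d)) R → φ ξ = 0 := fun ξ h =>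
      image_eq_zero_of_notMem_tsupport fun hh => h (hsupp hh)
    filter_upwards [hweak φ hφ hφc, ae_restrict_mem measurableSet_Ioc] with t hw ht
    obtain ⟨hIU, hIU₀, -, -, -, heq⟩ := hw
    have hψswap := fubini_swap (fun q : ℝ × EuclideanSpace ℝ (Fin d) => ψ q.1 q.2 * U q.1 q.2) hψUmeas
      t T R C ht.2 φ hφ.continuous hφ0 hC (hfinψU R hR0)
    have hFswap := fubini_swap (fun q : ℝ × EuclideanSpace ℝ (Fin d) => F q.1 q.2) hFmeas
      t T R C ht.2 φ hφ.continuous hφ0 hC (hfinF R hR0)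
    have hψ1 : (∫ s in Ioc (0:ℝ) t, ∫ ξ, ψ s ξ * U s ξ * conj (φ ξ))
        = ∫ ξ, (∫ s in Ioc (0:ℝ) t, ψ s ξ * U s ξ) * conj (φ ξ) := hψswap.1
    have hψ2 : Integrable (fun ξ => (∫ s in Ioc (0:ℝ) t, ψ s ξ * U s ξ) * conj (φ ξ))
        volume := hψswap.2
    have hF1 : (∫ s in Ioc (0:ℝ) t, ∫ ξ, F s ξ * conj (φ ξ))
        = ∫ ξ, (∫ s in Ioc (0:ℝ) t, F s ξ) * conj (φ ξ) := hFswap.1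
    have hF2 : Integrable (fun ξ => (∫ s in Ioc (0:ℝ) t, F s ξ) * conj (φ ξ))
        volume := hFswap.2
    rw [hψ1, hF1] at heq
    have hexp : (∫ ξ, (U t ξ - U₀ ξ - (∫ s in Ioc (0:ℝ) t, ψ s ξ * U s ξ)
          - ∫ s in Ioc (0:ℝ) t, F s ξ) * conj (φ ξ))
        = ∫ ξ, (U t ξ * conj (φ ξ) - U₀ ξ * conj (φ ξ)
            - (∫ s in Ioc (0:ℝ) t, ψ s ξ * U s ξ) * conj (φ ξ)
            - (∫ s in Ioc (0:ℝ) t, F s ξ) * conj (φ ξ)) :=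
      integral_congr_ae (Filter.Eventually.of_forall fun ξ => by ring)
    have hint1 : Integrable (fun ξ => U t ξ * conj (φ ξ) - U₀ ξ * conj (φ ξ)) volume :=
      hIU.sub hIU₀
    have hint2 : Integrable (fun ξ => U t ξ * conj (φ ξ) - U₀ ξ * conj (φ ξ)
        - (∫ s in Ioc (0:ℝ) t, ψ s ξ * U s ξ) * conj (φ ξ)) volume := hint1.sub hψ2
    rw [hexp, integral_sub hint2 hF2, integral_sub hint1 hψ2, integral_sub hIU hIU₀, heq]
    ring
  -- a.e. section-wise local integrability of U
  have hlocU : ∀ᵐ t ∂(volume.restrict (Ioc (0:ℝ) T)),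
      LocallyIntegrable (fun ξ => U t ξ) volume :=
    locint_sections (fun q : ℝ × EuclideanSpace ℝ (Fin d) => U q.1 q.2) hUmeas T hfinU
  -- the countable family of test bump functions
  obtain ⟨D, hDc, hDd⟩ := TopologicalSpace.exists_countable_dense (EuclideanSpace ℝ (Fin d))
  set ρ : ℕ → ContDiffBump (0 : EuclideanSpace ℝ (Fin d)) := fun n =>
    ⟨((n:ℝ)+1)⁻¹, 2*((n:ℝ)+1)⁻¹, by positivity, by
      have : (0:ℝ) < ((n:ℝ)+1)⁻¹ := by positivity
      linarith⟩ with hρ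
  have hρout : Tendsto (fun n => (ρ n).rOut) atTop (𝓝 0) := by
    have h1 : Tendsto (fun n : ℕ => ((n:ℝ)+1)⁻¹) atTop (𝓝 0) := by
      simpa [one_div] using tendsto_one_div_add_atTop_nhds_zero_nat (𝕜 := ℝ)
    simpa using h1.const_mul 2
  have hρK : ∀ n, (ρ n).rOut ≤ 2 * (ρ n).rIn := fun n => le_rfl
  -- smoothness and support of each member of the family
  have hφtest : ∀ n : ℕ, ∀ x : EuclideanSpace ℝ (Fin d),
      ContDiff ℝ (⊤ : ℕ∞) (fun ξ : EuclideanSpace ℝ (Fin d) => (((ρ n).normed volume (x - ξ) : ℝ) : ℂ))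
      ∧ HasCompactSupport (fun ξ : EuclideanSpace ℝ (Fin d) => (((ρ n).normed volume (x - ξ) : ℝ) : ℂ)) := by
    intro n x
    constructor
    · have h1 : ContDiff ℝ (⊤ : ℕ∞) ((ρ n).normed volume) := (ρ n).contDiff_normed
      have h2 : ContDiff ℝ (⊤ : ℕ∞) (fun ξ : EuclideanSpace ℝ (Fin d) => (ρ n).normed volume (x - ξ)) :=
        h1.comp (contDiff_const.sub contDiff_id)
      exact Complex.ofRealCLM.contDiff.comp h2
    · refine HasCompactSupport.intro (isCompact_closedBall x (ρ n).rOut) fun ξ hξ => ?_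
      have : (ρ n).normed volume (x - ξ) = 0 := by
        have hout : x - ξ ∉ Function.support ((ρ n).normed volume) := by
          rw [(ρ n).support_normed_eq]
          intro hmem
          apply hξ
          rw [mem_closedBall, dist_eq_norm]
          have := mem_ball_iff_norm.mp hmem
          rw [sub_zero] at this
          have h := this.le
          rwa [← norm_neg, neg_sub] at h
        simpa [Function.mem_support, not_not] using hout
      simp [this]
  -- good times: all tests against the countable family vanish
  have main_ae : ∀ᵐ t ∂(volume.restrict (Ioc (0:ℝ) T)), ∀ n : ℕ, ∀ x ∈ D,
      (∫ ξ, (U t ξ - U₀ ξ - (∫ s in Ioc (0:ℝ) t, ψ s ξ * U s ξ)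
        - ∫ s in Ioc (0:ℝ) t, F s ξ)
          * conj ((((ρ n).normed volume (x - ξ) : ℝ) : ℂ))) = 0 := by
    rw [ae_all_iff]
    intro n
    rw [ae_ball_iff hDc]
    intro x _
    exact tested _ (hφtest n x).1 (hφtest n x).2
  -- conclude a.e. in t that the section vanishes a.e.
  have sect : ∀ᵐ t ∂(volume.restrict (Ioc (0:ℝ) T)), ∀ᵐ ξ : EuclideanSpace ℝ (Fin d) ∂volume,
      U t ξ - U₀ ξ - (∫ s in Ioc (0:ℝ) t, ψ s ξ * U s ξ)
        - (∫ s in Ioc (0:ℝ) t, F s ξ) = 0 := by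
    filter_upwards [main_ae, hlocU, ae_restrict_mem measurableSet_Ioc] with t htest hlocUt ht
    have hg : LocallyIntegrable (fun ξ => U t ξ - U₀ ξ
        - (∫ s in Ioc (0:ℝ) t, ψ s ξ * U s ξ) - ∫ s in Ioc (0:ℝ) t, F s ξ) volume :=
      ((hlocUt.sub hU₀loc).sub
        (locint_J (fun q : ℝ × EuclideanSpace ℝ (Fin d) => ψ q.1 q.2 * U q.1 q.2) hψUmeas t T ht.2 hfinψU)).sub
        (locint_J (fun q : ℝ × EuclideanSpace ℝ (Fin d) => F q.1 q.2) hFmeas t T ht.2 hfinF)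
    refine key_ae_zero D hDd ρ hρout hρK _ hg fun n x hx => ?_
    have := htest n x hx
    simpa [Complex.conj_ofReal] using this
  -- transfer to the product space, using a measurable representative of U₀
  set U₀' : EuclideanSpace ℝ (Fin d) → ℂ := hU₀loc.aestronglyMeasurable.mk U₀ with hU₀'
  have hU₀'sm : StronglyMeasurable U₀' := hU₀loc.aestronglyMeasurable.stronglyMeasurable_mk
  have hU₀ae : U₀ =ᵐ[volume] U₀' := hU₀loc.aestronglyMeasurable.ae_eq_mk
  have hJψsm : StronglyMeasurable (fun p : ℝ × EuclideanSpace ℝ (Fin d) =>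
      ∫ s in Ioc (0:ℝ) p.1, ψ s p.2 * U s p.2) :=
    meas_J (fun q : ℝ × EuclideanSpace ℝ (Fin d) => ψ q.1 q.2 * U q.1 q.2) hψUmeas
  have hJFsm : StronglyMeasurable (fun p : ℝ × EuclideanSpace ℝ (Fin d) => ∫ s in Ioc (0:ℝ) p.1, F s p.2) :=
    meas_J (fun q : ℝ × EuclideanSpace ℝ (Fin d) => F q.1 q.2) hFmeas
  have hQm : MeasurableSet {p : ℝ × EuclideanSpace ℝ (Fin d) | U p.1 p.2 - U₀' p.2
      - (∫ s in Ioc (0:ℝ) p.1, ψ s p.2 * U s p.2)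
      - (∫ s in Ioc (0:ℝ) p.1, F s p.2) = 0} := by
    have hm : Measurable fun p : ℝ × EuclideanSpace ℝ (Fin d) => U p.1 p.2 - U₀' p.2
        - (∫ s in Ioc (0:ℝ) p.1, ψ s p.2 * U s p.2)
        - (∫ s in Ioc (0:ℝ) p.1, F s p.2) :=
      ((hUmeas.sub (hU₀'sm.measurable.comp measurable_snd)).sub hJψsm.measurable).sub
        hJFsm.measurable
    exact hm (measurableSet_singleton 0)
  have hprod : ∀ᵐ p : ℝ × EuclideanSpace ℝ (Fin d) ∂((volume.restrict (Ioc (0:ℝ) T)).prod volume),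
      U p.1 p.2 - U₀' p.2 - (∫ s in Ioc (0:ℝ) p.1, ψ s p.2 * U s p.2)
        - (∫ s in Ioc (0:ℝ) p.1, F s p.2) = 0 := by
    rw [Measure.ae_prod_iff_ae_ae hQm]
    filter_upwards [sect] with t hsect
    filter_upwards [hsect, hU₀ae] with ξ h1 h2
    rw [← h2]
    exact h1
  have hU₀prod : ∀ᵐ p : ℝ × EuclideanSpace ℝ (Fin d) ∂((volume.restrict (Ioc (0:ℝ) T)).prod volume),
      U₀ p.2 = U₀' p.2 := by
    have hsub : {p : ℝ × EuclideanSpace ℝ (Fin d) | ¬ U₀ p.2 = U₀' p.2}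
        ⊆ (univ : Set ℝ) ×ˢ {ξ : EuclideanSpace ℝ (Fin d) | ¬ U₀ ξ = U₀' ξ} := fun p hp => ⟨mem_univ _, hp⟩
    refine measure_mono_null hsub ?_
    rw [Measure.prod_prod]
    have h0 : volume {ξ : EuclideanSpace ℝ (Fin d) | ¬ U₀ ξ = U₀' ξ} = 0 := hU₀ae
    rw [h0, mul_zero]
  filter_upwards [hprod, hU₀prod] with p h1 h2
  rw [h2]
  linear_combination h1
end

section
/- Let d ≥ 1 and T, R > 0, and let ψ, F : (0,T)×ℝᵈ → ℂ and U₀ : ℝᵈ → ℂ be measurable. Assume that for a.e. ξ ∈ ℝᵈ one has ∫₀^T |ψ(t,ξ)| dt < ∞ and ∫₀^T |F(t,ξ)| dt < ∞, and that esssup_{ξ∈B_R} sup_{0≤s≤t≤T} exp(∫_s^t Re ψ(r,ξ) dr) < ∞. Then, with K := esssup_{ξ∈B_R} ∫₀^T |ψ(t,ξ)| · sup_{0≤s≤t} exp(∫_s^t Re ψ(r,ξ) dr) dt, one has ∫₀^T ∫_{B_R} |ψ(t,ξ)|·|H(t,ξ)| dξ dt ≤ K · ( ∫_{B_R} |U₀(ξ)|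 dξ + ∫_{B_R} ∫₀^T |F(s,ξ)| ds dξ ), where all quantities are read in [0,∞]. -/
set_option maxHeartbeats 1000000


open MeasureTheory Set Metric
open scoped ENNReal NNReal

/-- The Duhamel expression
`H(t,ξ) := exp(∫₀^t ψ(r,ξ) dr)·U₀(ξ) + ∫₀^t exp(∫ₛ^t ψ(r,ξ) dr)·F(s,ξ) ds`
associated with a time-dependent symbol `ψ`, data `F` and initial value `U₀`,
in the frequency variable `ξ` (Bochner integrals, defaulting to `0` when not integrable). -/
noncomputable def duhamel {d : ℕ}
    (ψ F : ℝ → EuclideanSpace ℝ (Fin d) → ℂ)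
    (U₀ : EuclideanSpace ℝ (Fin d) → ℂ) (t : ℝ) (ξ : EuclideanSpace ℝ (Fin d)) : ℂ :=
  Complex.exp (∫ r in Ioc (0 : ℝ) t, ψ r ξ) * U₀ ξ
    + ∫ s in Ioc (0 : ℝ) t, Complex.exp (∫ r in Ioc s t, ψ r ξ) * F s ξ

namespace DuhamelAux

variable {X : Type*} [MeasurableSpace X]

/-- Joint measurability of a parametrized Bochner integral over a varying interval `Ioc`. -/
lemma meas_int_Ioc {E : Type*} [NormedAddCommGroup E] [NormedSpace ℝ E]
    [MeasurableSpace E] [BorelSpace E] [SecondCountableTopology E]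
    {φ : ℝ → X → E} (hφ : Measurable fun p : ℝ × X => φ p.1 p.2) :
    Measurable fun q : (ℝ × ℝ) × X => ∫ r in Ioc q.1.1 q.1.2, φ r q.2 := by
  have hs : MeasurableSet {p : ((ℝ × ℝ) × X) × ℝ | p.1.1.1 < p.2 ∧ p.2 ≤ p.1.1.2} :=
    (measurableSet_lt measurable_fst.fst.fst measurable_snd).inter
      (measurableSet_le measurable_snd measurable_fst.fst.snd)
  have hind : Measurable fun p : ((ℝ × ℝ) × X) × ℝ =>
      ({p : ((ℝ × ℝ) × X) × ℝ | p.1.1.1 < p.2 ∧ p.2 ≤ p.1.1.2}).indicator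
        (fun p => φ p.2 p.1.2) p :=
    (hφ.comp (measurable_snd.prodMk measurable_fst.snd)).indicator hs
  have h2 := hind.stronglyMeasurable.integral_prod_right' (ν := volume)
  have heq : (fun q : (ℝ × ℝ) × X => ∫ r in Ioc q.1.1 q.1.2, φ r q.2)
      = fun q => ∫ r, ({p : ((ℝ × ℝ) × X) × ℝ | p.1.1.1 < p.2 ∧ p.2 ≤ p.1.1.2}).indicator
          (fun p => φ p.2 p.1.2) (q, r) := by
    funext q
    rw [← integral_indicator measurableSet_Ioc]
    rfl
  rw [heq]
  exact h2.measurable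

/-- Joint measurability of a parametrized lower Lebesgue integral over a varying `Ioc`. -/
lemma meas_lint_Ioc {g : ℝ → ℝ → X → ℝ≥0∞}
    (hg : Measurable fun p : ℝ × ℝ × X => g p.1 p.2.1 p.2.2) :
    Measurable fun q : ℝ × X => ∫⁻ s in Ioc (0 : ℝ) q.1, g s q.1 q.2 := by
  have hs : MeasurableSet {p : (ℝ × X) × ℝ | 0 < p.2 ∧ p.2 ≤ p.1.1} :=
    (measurableSet_lt measurable_const measurable_snd).inter
      (measurableSet_le measurable_snd measurable_fst.fst)
  have hind : Measurable fun p : (ℝ × X) × ℝ =>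
      ({p : (ℝ × X) × ℝ | 0 < p.2 ∧ p.2 ≤ p.1.1}).indicator
        (fun p => g p.2 p.1.1 p.1.2) p :=
    (hg.comp (measurable_snd.prodMk
      (measurable_fst.fst.prodMk measurable_fst.snd))).indicator hs
  have h2 := hind.lintegral_prod_right' (ν := volume)
  have heq : (fun q : ℝ × X => ∫⁻ s in Ioc (0 : ℝ) q.1, g s q.1 q.2)
      = fun q => ∫⁻ s, ({p : (ℝ × X) × ℝ | 0 < p.2 ∧ p.2 ≤ p.1.1}).indicator
          (fun p => g p.2 p.1.1 p.1.2) (q, s) := by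
    funext q
    rw [← lintegral_indicator measurableSet_Ioc]
    rfl
  rw [heq]
  exact h2

/-- The exponential weight `exp(∫ₛ^t Re ψ)` as an `ℝ≥0∞`-valued function. -/
noncomputable def Es (ψ : ℝ → X → ℂ) (s t : ℝ) (ξ : X) : ℝ≥0∞ :=
  ENNReal.ofReal (Real.exp (∫ r in Ioc s t, (ψ r ξ).re))

/-- The supremum over `0 ≤ s ≤ t` of the exponential weight. -/
noncomputable def Sp (ψ : ℝ → X → ℂ) (t : ℝ) (ξ : X) : ℝ≥0∞ :=
  ⨆ (s : ℝ) (_ : 0 ≤ s) (_ : s ≤ t), Es ψ s t ξ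

/-- The dominating function for `‖ψ‖·‖duhamel‖`. -/
noncomputable def hfn (ψ F : ℝ → X → ℂ) (U₀ : X → ℂ) (t : ℝ) (ξ : X) : ℝ≥0∞ :=
  (‖ψ t ξ‖₊ : ℝ≥0∞) *
    (Es ψ 0 t ξ * ‖U₀ ξ‖₊ + ∫⁻ s in Ioc (0 : ℝ) t, Es ψ s t ξ * ‖F s ξ‖₊)

lemma meas_Es {ψ : ℝ → X → ℂ} (hψ : Measurable fun p : ℝ × X => ψ p.1 p.2) :
    Measurable fun q : (ℝ × ℝ) × X => Es ψ q.1.1 q.1.2 q.2 :=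
  ENNReal.measurable_ofReal.comp (Real.measurable_exp.comp
    (meas_int_Ioc (φ := fun r ξ => (ψ r ξ).re) (Complex.measurable_re.comp hψ)))

lemma meas_hfn {ψ F : ℝ → X → ℂ} {U₀ : X → ℂ}
    (hψ : Measurable fun p : ℝ × X => ψ p.1 p.2)
    (hF : Measurable fun p : ℝ × X => F p.1 p.2)
    (hU : Measurable U₀) :
    Measurable fun p : ℝ × X => hfn ψ F U₀ p.1 p.2 := by
  unfold hfn
  apply Measurable.mul hψ.nnnorm.coe_nnreal_ennreal
  refine Measurable.add (f := fun p : ℝ × X => Es ψ 0 p.1 p.2 * (‖U₀ p.2‖₊ : ℝ≥0∞)) (g := fun p : ℝ × X => ∫⁻ s in Ioc (0 : ℝ) p.1, Es ψ s p.1 p.2 * (‖F s p.2‖₊ : ℝ≥0∞)) ?_ ?_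
  · exact ((meas_Es hψ).comp
      (((measurable_const.prodMk measurable_fst)).prodMk measurable_snd)).mul
      (hU.comp measurable_snd).nnnorm.coe_nnreal_ennreal
  · exact meas_lint_Ioc (g := fun s t ξ => Es ψ s t ξ * ‖F s ξ‖₊)
      (((meas_Es hψ).comp
        ((measurable_fst.prodMk measurable_snd.fst).prodMk measurable_snd.snd)).mul
        ((hF.comp (measurable_fst.prodMk measurable_snd.snd)).nnnorm.coe_nnreal_ennreal))

end DuhamelAux

open DuhamelAux

/-- **Pathwise weighted estimate for the Duhamel formula** (the paper's estimate controlling the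
action of the pseudo-differential symbol on the solution in the frequency variable): under the
same assumptions as the sup-in-time estimate, with
`K := esssup_{ξ∈B_R} ∫₀^T |ψ(t,ξ)|·sup_{0≤s≤t} exp(∫ₛ^t Re ψ(r,ξ) dr) dt`, one has
`∫₀^T ∫_{B_R} |ψ(t,ξ)|·|H(t,ξ)| dξ dt ≤ K·(∫_{B_R}|U₀| + ∫_{B_R}∫₀^T|F|)`, all read in `[0,∞]`. -/
theorem duhamel_weighted_estimate
    (d : ℕ) (hd : 1 ≤ d) (T R : ℝ) (hT : 0 < T) (hR : 0 < R)
    (ψ F : ℝ → EuclideanSpace ℝ (Fin d) → ℂ)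
    (U₀ : EuclideanSpace ℝ (Fin d) → ℂ)
    (hψmeas : Measurable fun p : ℝ × EuclideanSpace ℝ (Fin d) => ψ p.1 p.2)
    (hFmeas : Measurable fun p : ℝ × EuclideanSpace ℝ (Fin d) => F p.1 p.2)
    (hU₀meas : Measurable U₀)
    (hψint : ∀ᵐ ξ ∂(volume : Measure (EuclideanSpace ℝ (Fin d))),
      (∫⁻ t in Ioc (0 : ℝ) T, (‖ψ t ξ‖₊ : ℝ≥0∞)) < ⊤)
    (hFint : ∀ᵐ ξ ∂(volume : Measure (EuclideanSpace ℝ (Fin d))),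
      (∫⁻ t in Ioc (0 : ℝ) T, (‖F t ξ‖₊ : ℝ≥0∞)) < ⊤)
    (hexp : essSup
        (fun ξ => ⨆ (s : ℝ) (_ : 0 ≤ s) (t : ℝ) (_ : s ≤ t) (_ : t ≤ T),
          ENNReal.ofReal (Real.exp (∫ r in Ioc s t, (ψ r ξ).re)))
        (volume.restrict (ball (0 : EuclideanSpace ℝ (Fin d)) R)) < ⊤)
    (K : ℝ≥0∞)
    (hK : K = essSup
      (fun ξ => ∫⁻ t in Ioc (0 : ℝ) T,
        (‖ψ t ξ‖₊ : ℝ≥0∞) *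
          ⨆ (s : ℝ) (_ : 0 ≤ s) (_ : s ≤ t),
            ENNReal.ofReal (Real.exp (∫ r in Ioc s t, (ψ r ξ).re)))
      (volume.restrict (ball (0 : EuclideanSpace ℝ (Fin d)) R))) :
    (∫⁻ t in Ioc (0 : ℝ) T, ∫⁻ ξ in ball (0 : EuclideanSpace ℝ (Fin d)) R,
        (‖ψ t ξ‖₊ : ℝ≥0∞) * (‖duhamel ψ F U₀ t ξ‖₊ : ℝ≥0∞))
      ≤ K * ((∫⁻ ξ in ball (0 : EuclideanSpace ℝ (Fin d)) R, (‖U₀ ξ‖₊ : ℝ≥0∞))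
          + ∫⁻ ξ in ball (0 : EuclideanSpace ℝ (Fin d)) R,
              ∫⁻ s in Ioc (0 : ℝ) T, (‖F s ξ‖₊ : ℝ≥0∞)) := by
  -- a.e. ξ, ψ(·,ξ) is integrable on (0,T]
  have hAE : ∀ᵐ ξ ∂(volume : Measure (EuclideanSpace ℝ (Fin d))), IntegrableOn (fun r => ψ r ξ) (Ioc 0 T) volume := by
    filter_upwards [hψint] with ξ hξ
    have hm : Measurable fun r => ψ r ξ := hψmeas.comp (measurable_id.prodMk measurable_const)
    refine ⟨hm.aestronglyMeasurable, ?_⟩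
    exact hξ
  -- key norm computation
  have key : ∀ (ξ : EuclideanSpace ℝ (Fin d)) (s t' : ℝ), IntegrableOn (fun r => ψ r ξ) (Ioc s t') volume →
      ∀ u : ℂ, (‖Complex.exp (∫ r in Ioc s t', ψ r ξ) * u‖₊ : ℝ≥0∞) = Es ψ s t' ξ * ‖u‖₊ := by
    intro ξ s t' hi u
    rw [nnnorm_mul, ENNReal.coe_mul]
    congr 1
    rw [← ENNReal.ofReal_coe_nnreal, coe_nnnorm, Complex.norm_exp]
    unfold Es
    congr 2
    have := integral_re hi
    simpa using this.symm
  -- pointwise bound by the dominating function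
  have hpt : ∀ ξ : EuclideanSpace ℝ (Fin d), IntegrableOn (fun r => ψ r ξ) (Ioc 0 T) volume →
      ∀ t ∈ Ioc (0 : ℝ) T,
      (‖ψ t ξ‖₊ : ℝ≥0∞) * (‖duhamel ψ F U₀ t ξ‖₊ : ℝ≥0∞) ≤ hfn ψ F U₀ t ξ := by
    intro ξ hint t ht
    unfold hfn
    refine mul_le_mul_right ?_ _
    calc (‖duhamel ψ F U₀ t ξ‖₊ : ℝ≥0∞)
        ≤ (‖Complex.exp (∫ r in Ioc (0 : ℝ) t, ψ r ξ) * U₀ ξ‖₊ : ℝ≥0∞)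
          + (‖∫ s in Ioc (0 : ℝ) t, Complex.exp (∫ r in Ioc s t, ψ r ξ) * F s ξ‖₊ : ℝ≥0∞) := by
          unfold duhamel
          exact_mod_cast nnnorm_add_le _ _
      _ ≤ Es ψ 0 t ξ * ‖U₀ ξ‖₊ + ∫⁻ s in Ioc (0 : ℝ) t, Es ψ s t ξ * ‖F s ξ‖₊ := by
          apply add_le_add
          · exact le_of_eq (key ξ 0 t (hint.mono_set (Ioc_subset_Ioc le_rfl ht.2)) (U₀ ξ))
          · calc (‖∫ s in Ioc (0 : ℝ) t, Complex.exp (∫ r in Ioc s t, ψ r ξ) * F s ξ‖₊ : ℝ≥0∞)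
                ≤ ∫⁻ s in Ioc (0 : ℝ) t,
                    (‖Complex.exp (∫ r in Ioc s t, ψ r ξ) * F s ξ‖₊ : ℝ≥0∞) :=
                  enorm_integral_le_lintegral_enorm _
              _ = ∫⁻ s in Ioc (0 : ℝ) t, Es ψ s t ξ * ‖F s ξ‖₊ :=
                  setLIntegral_congr_fun measurableSet_Ioc (fun s hs =>
                    key ξ s t (hint.mono_set (Ioc_subset_Ioc hs.1.le ht.2)) (F s ξ))
  -- per-ξ time-integral bound
  have hstep : ∀ ξ : EuclideanSpace ℝ (Fin d), (∫⁻ s in Ioc (0 : ℝ) T, (‖F s ξ‖₊ : ℝ≥0∞)) ≠ ⊤ →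
      (∫⁻ t in Ioc (0 : ℝ) T, (‖ψ t ξ‖₊ : ℝ≥0∞) * Sp ψ t ξ) ≤ K →
      (∫⁻ t in Ioc (0 : ℝ) T, hfn ψ F U₀ t ξ)
        ≤ K * ((‖U₀ ξ‖₊ : ℝ≥0∞) + ∫⁻ s in Ioc (0 : ℝ) T, (‖F s ξ‖₊ : ℝ≥0∞)) := by
    intro ξ hFfin hKb
    have hFm : Measurable fun s => (‖F s ξ‖₊ : ℝ≥0∞) :=
      (hFmeas.comp (measurable_id.prodMk measurable_const)).nnnorm.coe_nnreal_ennreal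
    have hAne : ((‖U₀ ξ‖₊ : ℝ≥0∞) + ∫⁻ s in Ioc (0 : ℝ) T, (‖F s ξ‖₊ : ℝ≥0∞)) ≠ ⊤ :=
      ENNReal.add_ne_top.2 ⟨ENNReal.coe_ne_top, hFfin⟩
    calc (∫⁻ t in Ioc (0 : ℝ) T, hfn ψ F U₀ t ξ)
        ≤ ∫⁻ t in Ioc (0 : ℝ) T, ((‖ψ t ξ‖₊ : ℝ≥0∞) * Sp ψ t ξ) *
            ((‖U₀ ξ‖₊ : ℝ≥0∞) + ∫⁻ s in Ioc (0 : ℝ) T, (‖F s ξ‖₊ : ℝ≥0∞)) := by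
          refine setLIntegral_mono' measurableSet_Ioc fun t ht => ?_
          have h1 : Es ψ 0 t ξ ≤ Sp ψ t ξ :=
            le_iSup_of_le (0 : ℝ) (le_iSup_of_le (le_refl (0 : ℝ))
              (le_iSup_of_le ht.1.le le_rfl))
          have h2 : (∫⁻ s in Ioc (0 : ℝ) t, Es ψ s t ξ * ‖F s ξ‖₊)
              ≤ Sp ψ t ξ * ∫⁻ s in Ioc (0 : ℝ) T, (‖F s ξ‖₊ : ℝ≥0∞) := by
            calc (∫⁻ s in Ioc (0 : ℝ) t, Es ψ s t ξ * ‖F s ξ‖₊)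
                ≤ ∫⁻ s in Ioc (0 : ℝ) t, Sp ψ t ξ * ‖F s ξ‖₊ := by
                  refine setLIntegral_mono' measurableSet_Ioc fun s hs => ?_
                  have hEs : Es ψ s t ξ ≤ Sp ψ t ξ :=
                    le_iSup_of_le s (le_iSup_of_le hs.1.le (le_iSup_of_le hs.2 le_rfl))
                  exact mul_le_mul_left hEs _
              _ ≤ ∫⁻ s in Ioc (0 : ℝ) T, Sp ψ t ξ * ‖F s ξ‖₊ :=
                  lintegral_mono_set (Ioc_subset_Ioc le_rfl ht.2)
              _ = Sp ψ t ξ * ∫⁻ s in Ioc (0 : ℝ) T, (‖F s ξ‖₊ : ℝ≥0∞) :=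
                  lintegral_const_mul _ hFm
          calc hfn ψ F U₀ t ξ
              ≤ (‖ψ t ξ‖₊ : ℝ≥0∞) *
                  (Sp ψ t ξ * ‖U₀ ξ‖₊ +
                    Sp ψ t ξ * ∫⁻ s in Ioc (0 : ℝ) T, (‖F s ξ‖₊ : ℝ≥0∞)) := by
                unfold hfn
                exact mul_le_mul_right (add_le_add (mul_le_mul_left h1 _) h2) _
            _ = ((‖ψ t ξ‖₊ : ℝ≥0∞) * Sp ψ t ξ) *
                  ((‖U₀ ξ‖₊ : ℝ≥0∞) + ∫⁻ s in Ioc (0 : ℝ) T, (‖F s ξ‖₊ : ℝ≥0∞)) := by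
                rw [← mul_add, mul_assoc]
      _ = (∫⁻ t in Ioc (0 : ℝ) T, (‖ψ t ξ‖₊ : ℝ≥0∞) * Sp ψ t ξ) *
            ((‖U₀ ξ‖₊ : ℝ≥0∞) + ∫⁻ s in Ioc (0 : ℝ) T, (‖F s ξ‖₊ : ℝ≥0∞)) :=
          lintegral_mul_const' _ _ hAne
      _ ≤ K * ((‖U₀ ξ‖₊ : ℝ≥0∞) + ∫⁻ s in Ioc (0 : ℝ) T, (‖F s ξ‖₊ : ℝ≥0∞)) :=
          mul_le_mul_left hKb _
  -- measurability of the ξ ↦ ∫⁻ F piece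
  have hFximeas : Measurable fun ξ : EuclideanSpace ℝ (Fin d) => ∫⁻ s in Ioc (0 : ℝ) T, (‖F s ξ‖₊ : ℝ≥0∞) := by
    have h0 := meas_lint_Ioc (X := EuclideanSpace ℝ (Fin d)) (g := fun s _ ξ => (‖F s ξ‖₊ : ℝ≥0∞))
      ((hFmeas.comp (measurable_fst.prodMk measurable_snd.snd)).nnnorm.coe_nnreal_ennreal)
    have h2 : Measurable ((fun q : ℝ × EuclideanSpace ℝ (Fin d) =>
        ∫⁻ s in Ioc (0 : ℝ) q.1, (‖F s q.2‖₊ : ℝ≥0∞)) ∘ Prod.mk T) :=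
      h0.comp measurable_prodMk_left
    exact h2
  have hAmeas : Measurable fun ξ : EuclideanSpace ℝ (Fin d) =>
      (‖U₀ ξ‖₊ : ℝ≥0∞) + ∫⁻ s in Ioc (0 : ℝ) T, (‖F s ξ‖₊ : ℝ≥0∞) :=
    hU₀meas.nnnorm.coe_nnreal_ennreal.add hFximeas
  -- main chain
  calc (∫⁻ t in Ioc (0 : ℝ) T, ∫⁻ ξ in ball (0 : EuclideanSpace ℝ (Fin d)) R,
        (‖ψ t ξ‖₊ : ℝ≥0∞) * (‖duhamel ψ F U₀ t ξ‖₊ : ℝ≥0∞))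
      ≤ ∫⁻ t in Ioc (0 : ℝ) T, ∫⁻ ξ in ball (0 : EuclideanSpace ℝ (Fin d)) R, hfn ψ F U₀ t ξ := by
        refine setLIntegral_mono' measurableSet_Ioc fun t ht => ?_
        refine lintegral_mono_ae ?_
        filter_upwards [hAE.filter_mono (ae_mono Measure.restrict_le_self)] with ξ hξ
        exact hpt ξ hξ t ht
    _ = ∫⁻ ξ in ball (0 : EuclideanSpace ℝ (Fin d)) R, ∫⁻ t in Ioc (0 : ℝ) T, hfn ψ F U₀ t ξ :=
        lintegral_lintegral_swap (meas_hfn hψmeas hFmeas hU₀meas).aemeasurable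
    _ ≤ ∫⁻ ξ in ball (0 : EuclideanSpace ℝ (Fin d)) R,
          K * ((‖U₀ ξ‖₊ : ℝ≥0∞) + ∫⁻ s in Ioc (0 : ℝ) T, (‖F s ξ‖₊ : ℝ≥0∞)) := by
        refine lintegral_mono_ae ?_
        have hKae : ∀ᵐ ξ ∂(volume.restrict (ball (0 : EuclideanSpace ℝ (Fin d)) R)),
            (∫⁻ t in Ioc (0 : ℝ) T, (‖ψ t ξ‖₊ : ℝ≥0∞) * Sp ψ t ξ) ≤ K := by
          rw [hK]
          simp only [Sp, Es]
          exact ENNReal.ae_le_essSup _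
        filter_upwards [hFint.filter_mono (ae_mono Measure.restrict_le_self), hKae]
          with ξ h1 h2
        exact hstep ξ h1.ne h2
    _ = K * ((∫⁻ ξ in ball (0 : EuclideanSpace ℝ (Fin d)) R, (‖U₀ ξ‖₊ : ℝ≥0∞))
          + ∫⁻ ξ in ball (0 : EuclideanSpace ℝ (Fin d)) R, ∫⁻ s in Ioc (0 : ℝ) T, (‖F s ξ‖₊ : ℝ≥0∞)) := by
        rw [lintegral_const_mul K hAmeas, lintegral_add_left hU₀meas.nnnorm.coe_nnreal_ennreal]
end

section
/- Let d ≥ 1 and let (Ω,𝒜) be a measurable space. Let ψ : Ω×(0,∞)×ℝᵈ → ℂ, U₀ : Ω×ℝᵈ → ℂ and F : Ω×(0,∞)×ℝᵈ → ℂ be measurable with respect to the product σ-algebras 𝒜⊗B((0,∞))⊗B(ℝᵈ) and 𝒜⊗B(ℝᵈ), respectively. Define H : Ω×[0,∞)×ℝᵈ → ℂ by H(ω,t,ξ) := exp(∫₀^t ψ(ω,r,ξ) dr)·U₀(ω,ξ) + ∫₀^t exp(∫_s^t ψ(ω,r,ξ) dr)·F(ω,s,ξ) ds, where the integral of a non-integrable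 function is interpreted as 0. Then H is measurable with respect to 𝒜⊗B([0,∞))⊗B(ℝᵈ). -/
open MeasureTheory Set

section ParametricSetIntegral

variable {α β E : Type*} [MeasurableSpace α] [MeasurableSpace β] {μ : Measure β} [SFinite μ]
  [NormedAddCommGroup E] [NormedSpace ℝ E]

/-- Writing the set integral as the integral of an indicator reduces this to the measurability
of partial integrals in Fubini's theorem. -/
theorem MeasureTheory.StronglyMeasurable.setIntegral_of_measurableSet_mem {s : α → Set β}
    (hs : MeasurableSet {q : α × β | q.2 ∈ s q.1}) {f : α → β → E}
    (hf : StronglyMeasurable (Function.uncurry f)) :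
    StronglyMeasurable fun x => ∫ r in s x, f x r ∂μ := by
  have hsx : ∀ x, MeasurableSet (s x) := fun _ => measurable_prodMk_left hs
  simp_rw [← integral_indicator (hsx _)]
  exact (hf.indicator hs).integral_prod_right'

theorem Measurable.setIntegral_Ioc [MeasurableSpace E] [BorelSpace E]
    [SecondCountableTopology E] {a b : α → ℝ} (ha : Measurable a) (hb : Measurable b)
    {f : α → ℝ → E} (hf : Measurable (Function.uncurry f)) :
    Measurable fun x => ∫ r in Ioc (a x) (b x), f x r := by
  have hIoc : MeasurableSet {q : α × ℝ | q.2 ∈ Ioc (a q.1) (b q.1)} :=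
    (measurableSet_lt (ha.comp measurable_fst) measurable_snd).inter
      (measurableSet_le measurable_snd (hb.comp measurable_fst))
  exact (hf.stronglyMeasurable.setIntegral_of_measurableSet_mem hIoc).measurable

end ParametricSetIntegral

theorem duhamel_jointly_measurable_general
    (d : ℕ)
    {Ω : Type*} [MeasurableSpace Ω]
    (ψ : Ω → ℝ → EuclideanSpace ℝ (Fin d) → ℂ)
    (U₀ : Ω → EuclideanSpace ℝ (Fin d) → ℂ)
    (F : Ω → ℝ → EuclideanSpace ℝ (Fin d) → ℂ)
    (hψ : Measurable fun p : Ω × ℝ × EuclideanSpace ℝ (Fin d) => ψ p.1 p.2.1 p.2.2)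
    (hU₀ : Measurable fun p : Ω × EuclideanSpace ℝ (Fin d) => U₀ p.1 p.2)
    (hF : Measurable fun p : Ω × ℝ × EuclideanSpace ℝ (Fin d) => F p.1 p.2.1 p.2.2) :
    Measurable fun p : Ω × ℝ × EuclideanSpace ℝ (Fin d) =>
      Complex.exp (∫ r in Ioc (0 : ℝ) p.2.1, ψ p.1 r p.2.2) * U₀ p.1 p.2.2
        + ∫ s in Ioc (0 : ℝ) p.2.1,
            Complex.exp (∫ r in Ioc s p.2.1, ψ p.1 r p.2.2) * F p.1 s p.2.2 := by
  have hψ_at : Measurable fun q : (Ω × ℝ × EuclideanSpace ℝ (Fin d)) × ℝ =>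
      ψ q.1.1 q.2 q.1.2.2 :=
    hψ.comp (measurable_fst.fst.prodMk (measurable_snd.prodMk measurable_fst.snd.snd))
  have hF_at : Measurable fun q : (Ω × ℝ × EuclideanSpace ℝ (Fin d)) × ℝ =>
      F q.1.1 q.2 q.1.2.2 :=
    hF.comp (measurable_fst.fst.prodMk (measurable_snd.prodMk measurable_fst.snd.snd))
  have hψ_from : Measurable fun q : (Ω × ℝ × EuclideanSpace ℝ (Fin d)) × ℝ =>
      ∫ r in Ioc q.2 q.1.2.1, ψ q.1.1 r q.1.2.2 :=
    .setIntegral_Ioc measurable_snd measurable_fst.snd.fst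
      (hψ_at.comp (measurable_fst.fst.prodMk measurable_snd))
  have hψ_int : Measurable fun p : Ω × ℝ × EuclideanSpace ℝ (Fin d) =>
      ∫ r in Ioc (0 : ℝ) p.2.1, ψ p.1 r p.2.2 :=
    .setIntegral_Ioc measurable_const measurable_snd.fst hψ_at
  have hDuhamel : Measurable fun p : Ω × ℝ × EuclideanSpace ℝ (Fin d) =>
      ∫ s in Ioc (0 : ℝ) p.2.1, Complex.exp (∫ r in Ioc s p.2.1, ψ p.1 r p.2.2) * F p.1 s p.2.2 :=
    .setIntegral_Ioc measurable_const measurable_snd.fst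
      ((Complex.measurable_exp.comp hψ_from).mul hF_at)
  exact ((Complex.measurable_exp.comp hψ_int).mul
    (hU₀.comp (measurable_fst.prodMk measurable_snd.snd))).add hDuhamel

/-- **Joint measurability of the random Duhamel expression** (the measurability assertion of the
paper's lemma on the deterministic part of the solution): if the (possibly random) symbol `ψ`,
the initial data `U₀` and the inhomogeneity `F` are jointly measurable, then
`H(ω,t,ξ) := exp(∫₀^t ψ(ω,r,ξ) dr)·U₀(ω,ξ) + ∫₀^t exp(∫ₛ^t ψ(ω,r,ξ) dr)·F(ω,s,ξ) ds`
is jointly measurable in `(ω,t,ξ)` (Bochner integrals, interpreted as `0` when the integrand is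
not integrable). -/
theorem duhamel_jointly_measurable
    (d : ℕ) (hd : 1 ≤ d)
    {Ω : Type*} [MeasurableSpace Ω]
    (ψ : Ω → ℝ → EuclideanSpace ℝ (Fin d) → ℂ)
    (U₀ : Ω → EuclideanSpace ℝ (Fin d) → ℂ)
    (F : Ω → ℝ → EuclideanSpace ℝ (Fin d) → ℂ)
    (hψ : Measurable fun p : Ω × ℝ × EuclideanSpace ℝ (Fin d) => ψ p.1 p.2.1 p.2.2)
    (hU₀ : Measurable fun p : Ω × EuclideanSpace ℝ (Fin d) => U₀ p.1 p.2)
    (hF : Measurable fun p : Ω × ℝ × EuclideanSpace ℝ (Fin d) => F p.1 p.2.1 p.2.2) :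
    Measurable fun p : Ω × ℝ × EuclideanSpace ℝ (Fin d) =>
      Complex.exp (∫ r in Ioc (0 : ℝ) p.2.1, ψ p.1 r p.2.2) * U₀ p.1 p.2.2
        + ∫ s in Ioc (0 : ℝ) p.2.1,
            Complex.exp (∫ r in Ioc s p.2.1, ψ p.1 r p.2.2) * F p.1 s p.2.2 :=
  duhamel_jointly_measurable_general d ψ U₀ F hψ hU₀ hF
end
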